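/- (Population version of Theorem 1, correctly specified outcome regression.) Let Δμ_N and Δμ_C be versions of E[ΔY ∣ G=N, X] and E[ΔY ∣ G=C, X], and let ê_T : ℝ^q → [0,1] and ê_N, ê_C : ℝ^q → [ε, 1] be arbitrary measurable functions (possibly misspecified propensity models). Under consistency of the potential outcomes and Assumptions (A5) and (A6), the doubly-robust functional E[ (ê_T(X)/p_T)·(1{G=N}/ê_N(X))·(ΔY − Δμ_N(X)) + (1{G=T}/p_T)·Δμ_N(X) ] − E[ (ê_T(X)/p_T)·(1{G=C}/ê_C(X))·(ΔY − Δμ_C(X)) + (1{G=T}/p_T)·Δμ_C(X) ] equals δ := E[(Y₁^{(1,1)} − Y₁^{(1,0)})·1{G=T}]/p_T. -/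

import Mathlib

open MeasureTheory ProbabilityTheory Filter Topology

/-- Group label: `T` = treated (`g(A)=(1,0)`), `N` = neighboring control (`g(A)=(0,1)`),
`C` = non-neighboring control (`g(A)=(0,0)`). -/
inductive GLabel : Type
  | T | N | C
  deriving DecidableEq

instance : MeasurableSpace GLabel := ⊤

/-- The σ-algebra `𝔛` generated by the covariates `X`. -/
def sigmaX {Ω : Type} {q : ℕ} (X : Ω → (Fin q → ℝ)) : MeasurableSpace Ω :=
  MeasurableSpace.comap X inferInstance

/-- The indicator `1{G = g}` as a real-valued function. -/
def indG {Ω : Type} (G : Ω → GLabel) (g : GLabel) (ω : Ω) : ℝ :=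
  if G ω = g then 1 else 0

/-- `f` is a version of the conditional expectation `E[Z ∣ G = g, X]`:
it is measurable and `E[Z·1{G=g} ∣ 𝔛] = f(X)·e_g(X)` `P`-a.s. -/
def IsCondVersion {Ω : Type} [MeasurableSpace Ω] (P : Measure Ω) {q : ℕ}
    (X : Ω → (Fin q → ℝ)) (G : Ω → GLabel) (e : GLabel → (Fin q → ℝ) → ℝ)
    (g : GLabel) (Z : Ω → ℝ) (f : (Fin q → ℝ) → ℝ) : Prop :=
  Measurable f ∧
    P[(fun ω => Z ω * indG G g ω) | sigmaX X] =ᵐ[P] (fun ω => f (X ω) * e g (X ω))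

/-!
Each inverse-propensity augmentation term has mean zero whatever the working models `ê`, since it
is a bounded function of `X` times `1{G=g}(ΔY − Δμ_g(X))`, and `Δμ_g(X)` is the conditional mean of
`ΔY` on `{G = g}` given `X`. What remains is `E[1{G=T}(Δμ_N − Δμ_C)(X)] / p_T`. By consistency,
`Δμ_C = E[Y₁^{(0,0)} − Y₀^{(0,0)} ∣ C, X]` and
`Δμ_N = E[Y₁^{(0,1)} − Y₁^{(0,0)} ∣ N, X] + E[Y₁^{(0,0)} − Y₀^{(0,0)} ∣ N, X]`, so (A6) and (A5)
turn `Δμ_N − Δμ_C` into `−E[Y₁^{(1,0)} − Y₁^{(1,1)} ∣ T, X]`, whose mean on `{G = T}` is `δ·p_T`.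
-/

theorem MeasureTheory.integral_mul_condExp_of_stronglyMeasurable {Ω : Type*} {m m₀ : MeasurableSpace Ω}
    {μ : Measure Ω} (hm : m ≤ m₀) [SigmaFinite (μ.trim hm)] {u Z : Ω → ℝ}
    (hu : StronglyMeasurable[m] u) (huZ : Integrable (fun ω => u ω * Z ω) μ)
    (hZ : Integrable Z μ) : ∫ ω, u ω * μ[Z | m] ω ∂μ = ∫ ω, u ω * Z ω ∂μ :=
  (integral_congr_ae (condExp_mul_of_stronglyMeasurable_left hu huZ hZ).symm).trans
    (integral_condExp hm)

section

variable {Ω : Type} {q : ℕ} {X : Ω → (Fin q → ℝ)} {G : Ω → GLabel}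

lemma measurable_comp_sigmaX {f : (Fin q → ℝ) → ℝ} (hf : Measurable f) :
    Measurable[sigmaX X] (fun ω => f (X ω)) :=
  hf.comp (comap_measurable X)

lemma norm_indG_le (G : Ω → GLabel) (g : GLabel) (ω : Ω) : ‖indG G g ω‖ ≤ 1 := by
  unfold indG; split <;> simp

variable [MeasurableSpace Ω] {P : Measure Ω} {e : GLabel → (Fin q → ℝ) → ℝ} {g : GLabel}

lemma measurable_indG (hG : Measurable G) (g : GLabel) : Measurable (indG G g) :=
  Measurable.ite (hG (measurableSet_singleton g)) measurable_const measurable_const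

lemma MeasureTheory.Integrable.mul_indG {Z : Ω → ℝ} (hZ : Integrable Z P) (hG : Measurable G)
    (g : GLabel) : Integrable (fun ω => Z ω * indG G g ω) P :=
  hZ.mul_bdd (measurable_indG hG g).aestronglyMeasurable (.of_forall (norm_indG_le G g))

lemma integrable_indG [IsFiniteMeasure P] (hG : Measurable G) (g : GLabel) :
    Integrable (indG G g) P := by
  simpa using (integrable_const (1 : ℝ)).mul_indG (P := P) hG g

lemma mul_indG_ae_eq_of_ae_imp {Z Z' : Ω → ℝ} (h : ∀ᵐ ω ∂P, G ω = g → Z ω = Z' ω) :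
    (fun ω => Z ω * indG G g ω) =ᵐ[P] fun ω => Z' ω * indG G g ω := by
  filter_upwards [h] with ω hω
  by_cases hg : G ω = g
  · rw [hω hg]
  · simp [indG, hg]

namespace IsCondVersion

variable {Z Z' : Ω → ℝ} {f f' : (Fin q → ℝ) → ℝ}

lemma integrable_comp (hX : Measurable X) (hv : IsCondVersion P X G e g Z f) {ε : ℝ}
    (hε : 0 < ε) (hpos : ∀ x, ε ≤ e g x) : Integrable (fun ω => f (X ω)) P := by
  have hfe : Integrable (fun ω => f (X ω) * e g (X ω)) P := integrable_condExp.congr hv.2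
  refine (hfe.norm.const_mul ε⁻¹).mono' (hv.1.comp hX).aestronglyMeasurable (.of_forall fun ω => ?_)
  have he : 0 < e g (X ω) := hε.trans_le (hpos _)
  rw [norm_mul, Real.norm_of_nonneg he.le, le_inv_mul_iff₀ hε, mul_comm]
  exact mul_le_mul_of_nonneg_left (hpos _) (norm_nonneg _)

lemma congr_on (hv : IsCondVersion P X G e g Z f) (h : ∀ᵐ ω ∂P, G ω = g → Z ω = Z' ω) :
    IsCondVersion P X G e g Z' f :=
  ⟨hv.1, (condExp_congr_ae (mul_indG_ae_eq_of_ae_imp h)).symm.trans hv.2⟩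

lemma add (hG : Measurable G) (hv : IsCondVersion P X G e g Z f)
    (hv' : IsCondVersion P X G e g Z' f') (hZ : Integrable Z P) (hZ' : Integrable Z' P) :
    IsCondVersion P X G e g (fun ω => Z ω + Z' ω) (fun x => f x + f' x) := by
  refine ⟨hv.1.add hv'.1, ?_⟩
  have hsum : (fun ω => (Z ω + Z' ω) * indG G g ω) =
      (fun ω => Z ω * indG G g ω) + fun ω => Z' ω * indG G g ω := by
    funext ω; simp only [Pi.add_apply]; ring
  rw [hsum]
  filter_upwards [condExp_add (hZ.mul_indG hG g) (hZ'.mul_indG hG g) (sigmaX X), hv.2, hv'.2]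
    with ω h h₁ h₂
  rw [h, Pi.add_apply, h₁, h₂, add_mul]

lemma comp_ae_eq (hv : IsCondVersion P X G e g Z f) (hv' : IsCondVersion P X G e g Z f')
    (he : ∀ x, e g x ≠ 0) : (fun ω => f (X ω)) =ᵐ[P] fun ω => f' (X ω) := by
  filter_upwards [hv.2.symm.trans hv'.2] with ω h
  exact mul_right_cancel₀ (he _) h

/-- Both sides equal `E[φ(X) f(X) e_g(X)]`: the left one by pulling `φ(X)` out of `E[Z 1_g ∣ 𝔛]`,
the right one by pulling `φ(X) f(X)` out of `E[1_g ∣ 𝔛] = e_g(X)`. -/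
lemma integral_comp_mul [IsFiniteMeasure P] (hX : Measurable X) (hG : Measurable G)
    (hprop : P[indG G g | sigmaX X] =ᵐ[P] fun ω => e g (X ω)) {ε : ℝ} (hε : 0 < ε)
    (hpos : ∀ x, ε ≤ e g x) (hv : IsCondVersion P X G e g Z f) (hZ : Integrable Z P)
    {φ : (Fin q → ℝ) → ℝ} (hφ : Measurable φ) {C : ℝ} (hφC : ∀ x, ‖φ x‖ ≤ C) :
    ∫ ω, φ (X ω) * (Z ω * indG G g ω) ∂P = ∫ ω, φ (X ω) * (f (X ω) * indG G g ω) ∂P := by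
  have hm : sigmaX X ≤ _ := hX.comap_le
  have hφX : Measurable[sigmaX X] fun ω => φ (X ω) := measurable_comp_sigmaX hφ
  have hφXm : AEStronglyMeasurable (fun ω => φ (X ω)) P := (hφ.comp hX).aestronglyMeasurable
  have hφf : Integrable (fun ω => φ (X ω) * f (X ω)) P :=
    (hv.integrable_comp hX hε hpos).bdd_mul hφXm (.of_forall fun _ => hφC _)
  have hZg := hZ.mul_indG hG g
  have hleft := integral_mul_condExp_of_stronglyMeasurable hm hφX.stronglyMeasurable
    (hZg.bdd_mul hφXm (.of_forall fun _ => hφC _)) hZg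
  have hright := integral_mul_condExp_of_stronglyMeasurable (u := fun ω => φ (X ω) * f (X ω)) hm
    (hφX.mul (measurable_comp_sigmaX hv.1)).stronglyMeasurable (hφf.mul_indG hG g)
    (integrable_indG hG g)
  calc ∫ ω, φ (X ω) * (Z ω * indG G g ω) ∂P
      = ∫ ω, φ (X ω) * f (X ω) * e g (X ω) ∂P := by
        rw [← hleft]
        exact integral_congr_ae (by filter_upwards [hv.2] with ω h; rw [h, mul_assoc])
    _ = ∫ ω, φ (X ω) * (f (X ω) * indG G g ω) ∂P := by
        simp only [← mul_assoc]
        rw [← hright]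
        exact integral_congr_ae (by filter_upwards [hprop] with ω h; rw [h])

lemma integral_ipw_residual_add_eq [IsFiniteMeasure P] (hX : Measurable X) (hG : Measurable G)
    (hprop : P[indG G g | sigmaX X] =ᵐ[P] fun ω => e g (X ω)) {ε : ℝ} (hε : 0 < ε)
    (hpos : ∀ x, ε ≤ e g x) (hv : IsCondVersion P X G e g Z f) (hZ : Integrable Z P)
    {w eh : (Fin q → ℝ) → ℝ} (hw : Measurable w) (hw1 : ∀ x, ‖w x‖ ≤ 1) (heh : Measurable eh)
    (hehε : ∀ x, ε ≤ eh x) (g' : GLabel) (c : ℝ) :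
    ∫ ω, (w (X ω) / c) * (indG G g ω / eh (X ω)) * (Z ω - f (X ω))
        + (indG G g' ω / c) * f (X ω) ∂P
      = (∫ ω, f (X ω) * indG G g' ω ∂P) / c := by
  have hφ : Measurable fun x => w x / c / eh x := (hw.div_const c).div heh
  have hφC : ∀ x, ‖w x / c / eh x‖ ≤ 1 * ‖c‖⁻¹ * ε⁻¹ := fun x => by
    have heh' : ε ≤ ‖eh x‖ := (hehε x).trans (le_abs_self _)
    rw [norm_div, norm_div, div_eq_mul_inv, div_eq_mul_inv]
    gcongr
    exact hw1 x
  have hφXm : AEStronglyMeasurable (fun ω => w (X ω) / c / eh (X ω)) P :=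
    (hφ.comp hX).aestronglyMeasurable
  have hf := hv.integrable_comp hX hε hpos
  have hI₁ := (hZ.mul_indG hG g).bdd_mul hφXm (.of_forall fun _ => hφC _)
  have hI₂ := (hf.mul_indG hG g).bdd_mul hφXm (.of_forall fun _ => hφC _)
  have hI₁₂ : Integrable (fun ω => w (X ω) / c / eh (X ω) * (Z ω * indG G g ω)
      - w (X ω) / c / eh (X ω) * (f (X ω) * indG G g ω)) P := hI₁.sub hI₂
  have hI₃ := (hf.mul_indG hG g').div_const c
  calc _ = ∫ ω, (w (X ω) / c / eh (X ω) * (Z ω * indG G g ω)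
              - w (X ω) / c / eh (X ω) * (f (X ω) * indG G g ω))
            + f (X ω) * indG G g' ω / c ∂P :=
        integral_congr_ae (.of_forall fun ω => by ring)
    _ = _ := by
      rw [integral_add hI₁₂ hI₃, integral_sub hI₁ hI₂,
        hv.integral_comp_mul hX hG hprop hε hpos hZ hφ hφC, sub_self, zero_add, integral_div]

end IsCondVersion

end

theorem stmt_7_general
    {Ω : Type} [MeasurableSpace Ω] (P : Measure Ω) [IsProbabilityMeasure P]
    {q : ℕ} (X : Ω → (Fin q → ℝ)) (hX : Measurable X)
    (G : Ω → GLabel) (hG : Measurable G)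
    (Y0 Y1 : Ω → ℝ) (hY0 : Integrable Y0 P) (hY1 : Integrable Y1 P)
    (e : GLabel → (Fin q → ℝ) → ℝ)
    (hprop : ∀ g : GLabel,
      P[(fun ω => indG G g ω) | sigmaX X] =ᵐ[P] (fun ω => e g (X ω)))
    (ε : ℝ) (hε : 0 < ε) (hpos : ∀ g x, ε ≤ e g x)
    (Y110 Y111 Y101 Y100 Y000 : Ω → ℝ)
    (hI10 : Integrable Y110 P) (hI11 : Integrable Y111 P)
    (hI01 : Integrable Y101 P) (hI00 : Integrable Y100 P) (hI000 : Integrable Y000 P)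
    (hconsN : ∀ᵐ ω ∂P, G ω = GLabel.N → Y1 ω = Y101 ω)
    (hconsC : ∀ᵐ ω ∂P, G ω = GLabel.C → Y1 ω = Y100 ω)
    (hcons0 : Y0 =ᵐ[P] Y000)
    (fT fN : (Fin q → ℝ) → ℝ)
    (hfT : IsCondVersion P X G e GLabel.T (fun ω => Y110 ω - Y111 ω) fT)
    (hfN : IsCondVersion P X G e GLabel.N (fun ω => Y101 ω - Y100 ω) fN)
    (hA5 : ∀ᵐ ω ∂P, fT (X ω) + fN (X ω) = 0)
    (gN gC : (Fin q → ℝ) → ℝ)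
    (hgN : IsCondVersion P X G e GLabel.N (fun ω => Y100 ω - Y000 ω) gN)
    (hgC : IsCondVersion P X G e GLabel.C (fun ω => Y100 ω - Y000 ω) gC)
    (hA6 : ∀ᵐ ω ∂P, gN (X ω) = gC (X ω))
    (ΔμN ΔμC : (Fin q → ℝ) → ℝ)
    (hΔμN : IsCondVersion P X G e GLabel.N (fun ω => Y1 ω - Y0 ω) ΔμN)
    (hΔμC : IsCondVersion P X G e GLabel.C (fun ω => Y1 ω - Y0 ω) ΔμC)
    (eTh eNh eCh : (Fin q → ℝ) → ℝ)
    (heTh : Measurable eTh) (heNh : Measurable eNh) (heCh : Measurable eCh)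
    (heTh01 : ∀ x, 0 ≤ eTh x ∧ eTh x ≤ 1)
    (heNhε : ∀ x, ε ≤ eNh x ∧ eNh x ≤ 1)
    (heChε : ∀ x, ε ≤ eCh x ∧ eCh x ≤ 1)
    :
    (∫ ω, (eTh (X ω) / (P {ω | G ω = GLabel.T}).toReal) * (indG G GLabel.N ω / eNh (X ω)) *
          ((Y1 ω - Y0 ω) - ΔμN (X ω))
        + (indG G GLabel.T ω / (P {ω | G ω = GLabel.T}).toReal) * ΔμN (X ω) ∂P)
      - (∫ ω, (eTh (X ω) / (P {ω | G ω = GLabel.T}).toReal) * (indG G GLabel.C ω / eCh (X ω)) *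
          ((Y1 ω - Y0 ω) - ΔμC (X ω))
        + (indG G GLabel.T ω / (P {ω | G ω = GLabel.T}).toReal) * ΔμC (X ω) ∂P)
      = (∫ ω, (Y111 ω - Y110 ω) * indG G GLabel.T ω ∂P) / (P {ω | G ω = GLabel.T}).toReal := by
  have heTh1 : ∀ x, ‖eTh x‖ ≤ 1 := fun x => abs_le.2 ⟨by linarith [heTh01 x], (heTh01 x).2⟩
  have he0 : ∀ g x, e g x ≠ 0 := fun g x => (hε.trans_le (hpos g x)).ne'
  rw [hΔμN.integral_ipw_residual_add_eq hX hG (hprop _) hε (hpos _) (hY1.sub hY0) heTh heTh1 heNh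
      (fun x => (heNhε x).1), hΔμC.integral_ipw_residual_add_eq hX hG (hprop _) hε (hpos _) (hY1.sub hY0)
      heTh heTh1 heCh (fun x => (heChε x).1), ← sub_div,
    ← integral_sub ((hΔμN.integrable_comp hX hε (hpos _)).mul_indG hG _)
      ((hΔμC.integrable_comp hX hε (hpos _)).mul_indG hG _)]
  congr 1
  have hN : (fun ω => ΔμN (X ω)) =ᵐ[P] fun ω => fN (X ω) + gN (X ω) :=
    hΔμN.comp_ae_eq (((hfN.add hG hgN (hI01.sub hI00) (hI00.sub hI000))).congr_on <| by
      filter_upwards [hconsN, hcons0] with ω h₁ h₀ hω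
      rw [h₁ hω, h₀]; ring) (he0 _)
  have hC : (fun ω => ΔμC (X ω)) =ᵐ[P] fun ω => gC (X ω) :=
    hΔμC.comp_ae_eq (hgC.congr_on <| by
      filter_upwards [hconsC, hcons0] with ω h₁ h₀ hω
      rw [h₁ hω, h₀]) (he0 _)
  have hT := hfT.integral_comp_mul hX hG (hprop _) hε (hpos _) (hI10.sub hI11)
    measurable_const (C := 1) (fun _ => norm_one.le)
  simp only [one_mul] at hT
  calc _ = ∫ ω, -(fT (X ω) * indG G GLabel.T ω) ∂P := by
        refine integral_congr_ae ?_
        filter_upwards [hN, hC, hA5, hA6] with ω hNω hCω h5 h6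
        rw [hNω, hCω, ← h6, eq_neg_of_add_eq_zero_right h5]; ring
    _ = _ := by
        rw [integral_neg, ← hT, ← integral_neg]
        exact integral_congr_ae (.of_forall fun ω => by ring)

theorem stmt_7
    {Ω : Type} [MeasurableSpace Ω] (P : Measure Ω) [IsProbabilityMeasure P]
    {q : ℕ} (X : Ω → (Fin q → ℝ)) (hX : Measurable X)
    (G : Ω → GLabel) (hG : Measurable G)
    (Y0 Y1 : Ω → ℝ) (hY0 : Integrable Y0 P) (hY1 : Integrable Y1 P)
    (e : GLabel → (Fin q → ℝ) → ℝ) (he : ∀ g, Measurable (e g))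
    (he1 : ∀ g x, e g x ≤ 1)
    (hprop : ∀ g : GLabel,
      P[(fun ω => indG G g ω) | sigmaX X] =ᵐ[P] (fun ω => e g (X ω)))
    (ε : ℝ) (hε : 0 < ε) (hpos : ∀ g x, ε ≤ e g x)
    (hpT : 0 < (P {ω | G ω = GLabel.T}).toReal)
    (Y110 Y111 Y101 Y100 Y000 : Ω → ℝ)
    (hI10 : Integrable Y110 P) (hI11 : Integrable Y111 P)
    (hI01 : Integrable Y101 P) (hI00 : Integrable Y100 P) (hI000 : Integrable Y000 P)
    (hconsT : ∀ᵐ ω ∂P, G ω = GLabel.T → Y1 ω = Y110 ω)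
    (hconsN : ∀ᵐ ω ∂P, G ω = GLabel.N → Y1 ω = Y101 ω)
    (hconsC : ∀ᵐ ω ∂P, G ω = GLabel.C → Y1 ω = Y100 ω)
    (hcons0 : Y0 =ᵐ[P] Y000)
    (fT fN : (Fin q → ℝ) → ℝ)
    (hfT : IsCondVersion P X G e GLabel.T (fun ω => Y110 ω - Y111 ω) fT)
    (hfN : IsCondVersion P X G e GLabel.N (fun ω => Y101 ω - Y100 ω) fN)
    (hA5 : ∀ᵐ ω ∂P, fT (X ω) + fN (X ω) = 0)
    (gN gC : (Fin q → ℝ) → ℝ)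
    (hgN : IsCondVersion P X G e GLabel.N (fun ω => Y100 ω - Y000 ω) gN)
    (hgC : IsCondVersion P X G e GLabel.C (fun ω => Y100 ω - Y000 ω) gC)
    (hA6 : ∀ᵐ ω ∂P, gN (X ω) = gC (X ω))
    (ΔμN ΔμC : (Fin q → ℝ) → ℝ)
    (hΔμN : IsCondVersion P X G e GLabel.N (fun ω => Y1 ω - Y0 ω) ΔμN)
    (hΔμC : IsCondVersion P X G e GLabel.C (fun ω => Y1 ω - Y0 ω) ΔμC)
    (eTh eNh eCh : (Fin q → ℝ) → ℝ)
    (heTh : Measurable eTh) (heNh : Measurable eNh) (heCh : Measurable eCh)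
    (heTh01 : ∀ x, 0 ≤ eTh x ∧ eTh x ≤ 1)
    (heNhε : ∀ x, ε ≤ eNh x ∧ eNh x ≤ 1)
    (heChε : ∀ x, ε ≤ eCh x ∧ eCh x ≤ 1)
    :
    (∫ ω, (eTh (X ω) / (P {ω | G ω = GLabel.T}).toReal) * (indG G GLabel.N ω / eNh (X ω)) *
          ((Y1 ω - Y0 ω) - ΔμN (X ω))
        + (indG G GLabel.T ω / (P {ω | G ω = GLabel.T}).toReal) * ΔμN (X ω) ∂P)
      - (∫ ω, (eTh (X ω) / (P {ω | G ω = GLabel.T}).toReal) * (indG G GLabel.C ω / eCh (X ω)) *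
          ((Y1 ω - Y0 ω) - ΔμC (X ω))
        + (indG G GLabel.T ω / (P {ω | G ω = GLabel.T}).toReal) * ΔμC (X ω) ∂P)
      = (∫ ω, (Y111 ω - Y110 ω) * indG G GLabel.T ω ∂P) / (P {ω | G ω = GLabel.T}).toReal :=
  stmt_7_general P X hX G hG Y0 Y1 hY0 hY1 e hprop ε hε hpos Y110 Y111 Y101 Y100 Y000 hI10 hI11 hI01
    hI00 hI000 hconsN hconsC hcons0 fT fN hfT hfN hA5 gN gC hgN hgC hA6 ΔμN ΔμC hΔμN hΔμC eTh eNh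
    eCh heTh heNh heCh heTh01 heNhε heChε
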